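/- arXiv:1210.4056 — 8 statements merged into one kernel-verified Lean document; each statement's English description precedes it below -/
import Mathlib

section
/- In the simplex category Δ, for each k ≥ 2 there is a pushout square: the object [k] is the pushout of [k-1] and [1] along [0], where [0] → [k-1] picks out 0 and [0] → [1] picks out 1, with q : [1] → [k] given by q(i) = i and p : [k-1] → [k] given by p(t) = t+1. Consequently [k] is the colimit (iterated pushout) of k copies of [1] glued along [0]. -/
/-!
A cocone under the span `⦋b⦌ ← ⦋0⦌ → ⦋a⦌` is a pair of monotone maps `g` on `⦋b⦌` and `f` on
`⦋a⦌` with `f a = g 0`. Since `⦋a + b⦌` is the union of the intervals `[0, a]` and `[a, a + b]`,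
which meet only in `a`, such a pair glues to a unique monotone map on `⦋a + b⦌`.
-/

open CategoryTheory Simplicial

def OrderHom.finGlue {α : Type*} [Preorder α] {a b n : ℕ} (hn : a + b = n)
    (f : Fin (a + 1) →o α) (g : Fin (b + 1) →o α) (hfg : f (Fin.last a) = g 0) :
    Fin (n + 1) →o α where
  toFun i := if hi : (i : ℕ) ≤ a then f ⟨i, by omega⟩ else g ⟨i - a, by omega⟩
  monotone' i j hij := by
    have hij : (i : ℕ) ≤ j := hij
    dsimp only
    split_ifs with hi hj hj
    · exact f.monotone (Fin.mk_le_mk.mpr hij)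
    · calc f ⟨i, _⟩ ≤ f (Fin.last a) := f.monotone (Fin.le_last _)
        _ = g 0 := hfg
        _ ≤ g _ := g.monotone (Fin.zero_le _)
    · omega
    · exact g.monotone (Fin.mk_le_mk.mpr (by omega))

namespace SimplexCategory

@[simp]
lemma val_subinterval_apply {j l n : ℕ} (hjl : j + l ≤ n) (i : Fin (l + 1)) :
    ((subinterval j l hjl).toOrderHom i : ℕ) = i + j :=
  rfl

variable {a b n : ℕ} (hn : a + b = n)

lemma const_comp_subinterval_eq :
    const ⦋0⦌ ⦋b⦌ 0 ≫ subinterval a b hn.le =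
      const ⦋0⦌ ⦋a⦌ (Fin.last a) ≫ subinterval 0 a (by omega) := by
  simp only [const_subinterval_eq, Fin.val_zero, Fin.val_last, add_zero, zero_add]

lemma hom_ext_subinterval {X : SimplexCategory} {e e' : ⦋n⦌ ⟶ X}
    (h₁ : subinterval 0 a (by omega) ≫ e = subinterval 0 a (by omega) ≫ e')
    (h₂ : subinterval a b hn.le ≫ e = subinterval a b hn.le ≫ e') : e = e' := by
  ext (i : Fin (n + 1)) : 3
  by_cases hi : (i : ℕ) ≤ a
  · have hi : i = (subinterval 0 a (by omega)).toOrderHom (⟨i, by omega⟩ : Fin (a + 1)) := rfl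
    rw [hi]
    exact congr(Hom.toOrderHom $h₁ _)
  · have hi : i = (subinterval a b hn.le).toOrderHom (⟨i - a, by omega⟩ : Fin (b + 1)) :=
      Fin.ext (by simp only [val_subinterval_apply]; omega)
    rw [hi]
    exact congr(Hom.toOrderHom $h₂ _)

section finGlue

variable {X : SimplexCategory} (f : Fin (a + 1) →o Fin (X.len + 1))
  (g : Fin (b + 1) →o Fin (X.len + 1)) (hfg : f (Fin.last a) = g 0)

lemma subinterval_comp_finGlue_left :
    subinterval 0 a (by omega) ≫ Hom.mk (OrderHom.finGlue hn f g hfg) = Hom.mk f := by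
  ext i : 3
  simp [OrderHom.finGlue, i.is_le]

lemma subinterval_comp_finGlue_right :
    subinterval a b hn.le ≫ Hom.mk (OrderHom.finGlue hn f g hfg) = Hom.mk g := by
  ext i : 3
  rcases Fin.eq_zero_or_eq_succ i with rfl | ⟨j, rfl⟩
  · simp [OrderHom.finGlue, ← hfg, Fin.last]
  · simp [OrderHom.finGlue, Fin.succ]

end finGlue

lemma isPushout_subinterval :
    IsPushout (const ⦋0⦌ ⦋b⦌ 0) (const ⦋0⦌ ⦋a⦌ (Fin.last a))
      (subinterval a b hn.le) (subinterval 0 a (by omega)) := by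
  refine ⟨⟨const_comp_subinterval_eq hn⟩, ⟨Limits.PushoutCocone.IsColimit.mk _
    (fun s => Hom.mk (OrderHom.finGlue hn s.inr.toOrderHom s.inl.toOrderHom ?_)) ?_ ?_ ?_⟩⟩
  · exact congr(Hom.toOrderHom $s.condition 0).symm
  · intro s
    exact subinterval_comp_finGlue_right hn _ _ _
  · intro s
    exact subinterval_comp_finGlue_left hn _ _ _
  · intro s e h₁ h₂
    apply hom_ext_subinterval hn
    · exact h₂.trans (subinterval_comp_finGlue_left hn s.inr.toOrderHom _ _).symm
    · exact h₁.trans (subinterval_comp_finGlue_right hn _ s.inl.toOrderHom _).symm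

end SimplexCategory

theorem stmt0 (m : ℕ) :
    IsPushout
      -- [0] ⟶ [k-1], 0 ↦ 0
      (SimplexCategory.mkHom (OrderHom.const _ 0) :
        SimplexCategory.mk 0 ⟶ SimplexCategory.mk (m + 1))
      -- [0] ⟶ [1], 0 ↦ 1
      (SimplexCategory.mkHom (OrderHom.const _ 1) :
        SimplexCategory.mk 0 ⟶ SimplexCategory.mk 1)
      -- p : [k-1] ⟶ [k], t ↦ t + 1
      (SimplexCategory.mkHom ⟨Fin.succ, fun a b h => by simp only [Fin.le_def, Fin.val_succ] at h ⊢; omega⟩ :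
        SimplexCategory.mk (m + 1) ⟶ SimplexCategory.mk (m + 2))
      -- q : [1] ⟶ [k], i ↦ i
      (SimplexCategory.mkHom ⟨Fin.castLE (by omega), fun _ _ h => h⟩ :
        SimplexCategory.mk 1 ⟶ SimplexCategory.mk (m + 2)) :=
  -- the four maps are definitionally `const` and `subinterval` maps
  SimplexCategory.isPushout_subinterval (a := 1) (b := m + 1) (n := m + 2) (by omega)
end

section
/- Let C be a category and W a class of arrows satisfying CF1, CF2, CF3. Given two spans (u₁ : C → A₁, u₂ : C → A₂) and (v₁ : D → A₁, v₂ : D → A₂) with w₁u₁ = w₂u₂ ∈ W and w₁v₁ = w₂v₂ ∈ W (where w₁ : A₁ → B, w₂ : A₂ → B are in W), there exist arrows r : E' → C and s : E' → D such that u₁r = v₁s, u₂r = v₂s, and w₁u₁r ∈ W. Hence the relation identifying two such spans is trivial: any two spans between (w₁) and (w₂) satisfying the compatibility conditions are equivalent. -/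
/-!
STATEMENT 7: Let `C` be a category with `W` satisfying CF1, CF2, CF3.  Given two
spans `(u₁ : C₀ ⟶ A₁, u₂ : C₀ ⟶ A₂)` and `(v₁ : D₀ ⟶ A₁, v₂ : D₀ ⟶ A₂)` with
`u₁ ≫ w₁ = u₂ ≫ w₂ ∈ W` and `v₁ ≫ w₁ = v₂ ≫ w₂ ∈ W` (where `w₁ : A₁ ⟶ B`,
`w₂ : A₂ ⟶ B` are in `W`), there exist arrows `r : E ⟶ C₀` and `s : E ⟶ D₀`
such that `u₁ ∘ r = v₁ ∘ s`, `u₂ ∘ r = v₂ ∘ s` and `w₁ ∘ u₁ ∘ r ∈ W`;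
hence any two such spans are equivalent.
-/

open CategoryTheory

universe v u

theorem stmt7 {C : Type u} [Category.{v} C] (W : MorphismProperty C)
    (CF1_iso : ∀ {X Y : C} (f : X ⟶ Y), IsIso f → W f)
    (CF1_comp : ∀ {X Y Z : C} (f : X ⟶ Y) (g : Y ⟶ Z), W f → W g → W (f ≫ g))
    (CF2 : ∀ {A B C' : C} (f : C' ⟶ B) (w : A ⟶ B), W w →
      ∃ (D : C) (f' : D ⟶ A) (w' : D ⟶ C'), W w' ∧ w' ≫ f = f' ≫ w)
    (CF3 : ∀ {A B C' : C} (f g : A ⟶ B) (w : B ⟶ C'), W w → f ≫ w = g ≫ w →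
      ∃ (X : C) (w' : X ⟶ A), W w' ∧ w' ≫ f = w' ≫ g)
    {A₁ A₂ B : C} (w₁ : A₁ ⟶ B) (w₂ : A₂ ⟶ B) (hw₁ : W w₁) (hw₂ : W w₂)
    {C₀ D₀ : C} (u₁ : C₀ ⟶ A₁) (u₂ : C₀ ⟶ A₂) (v₁ : D₀ ⟶ A₁) (v₂ : D₀ ⟶ A₂)
    (hu : u₁ ≫ w₁ = u₂ ≫ w₂) (huW : W (u₁ ≫ w₁))
    (hv : v₁ ≫ w₁ = v₂ ≫ w₂) (hvW : W (v₁ ≫ w₁)) :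
    ∃ (E : C) (r : E ⟶ C₀) (s : E ⟶ D₀),
      r ≫ u₁ = s ≫ v₁ ∧ r ≫ u₂ = s ≫ v₂ ∧ W (r ≫ u₁ ≫ w₁) := by
  -- Complete the cospan (u₁≫w₁, v₁≫w₁) using CF2
  obtain ⟨E₀, s₀, r₀, hr₀, hsq⟩ := CF2 (u₁ ≫ w₁) (v₁ ≫ w₁) hvW
  -- hsq : r₀ ≫ (u₁ ≫ w₁) = s₀ ≫ (v₁ ≫ w₁)
  obtain ⟨E₁, t, ht, hteq⟩ := CF3 (r₀ ≫ u₁) (s₀ ≫ v₁) w₁ hw₁ (by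
    simpa [Category.assoc] using hsq)
  have h2 : (t ≫ r₀ ≫ u₂) ≫ w₂ = (t ≫ s₀ ≫ v₂) ≫ w₂ := by
    have : r₀ ≫ u₂ ≫ w₂ = s₀ ≫ v₂ ≫ w₂ := by
      rw [← hu, ← hv]; simpa [Category.assoc] using hsq
    simp only [Category.assoc, this]
  obtain ⟨E₂, t₂, ht₂, hteq₂⟩ := CF3 (t ≫ r₀ ≫ u₂) (t ≫ s₀ ≫ v₂) w₂ hw₂ h2
  refine ⟨E₂, t₂ ≫ t ≫ r₀, t₂ ≫ t ≫ s₀, ?_, ?_, ?_⟩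
  · have := hteq
    simp only [Category.assoc] at this ⊢
    rw [this]
  · simpa [Category.assoc] using hteq₂
  · have : (t₂ ≫ t ≫ r₀) ≫ u₁ ≫ w₁ = (t₂ ≫ t) ≫ (r₀ ≫ u₁ ≫ w₁) := by
      simp [Category.assoc]
    rw [this]
    exact CF1_comp _ _ (CF1_comp _ _ ht₂ ht) (CF1_comp _ _ hr₀ huW)
end

section
/- Let C be a category with a class W satisfying CF1, CF2, CF3. In the bicategory of fractions C(W⁻¹), whose arrows are spans A ←w S →f B with w ∈ W, there is at most one 2-cell between any two parallel arrows; that is, C(W⁻¹) is locally posetal. -/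
/-!
STATEMENT 8: For a category `C` with a class `W` of arrows satisfying CF1, CF2,
CF3, the bicategory of fractions `C(W⁻¹)` has at most one 2-cell between any
two parallel arrows (spans `A ←w S →f B` with `w ∈ W`), i.e. it is locally
posetal.  Concretely: any two representatives `(T, u₁, u₂)` and `(T', u₁', u₂')`
of 2-cells between the spans `(w₁, S₁, f₁)` and `(w₂, S₂, f₂)` are identified
by the equivalence relation on 2-cell representatives.
-/

open CategoryTheory

universe v u

theorem stmt8 {C : Type u} [Category.{v} C] (W : MorphismProperty C)
    (CF1_iso : ∀ {X Y : C} (f : X ⟶ Y), IsIso f → W f)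
    (CF1_comp : ∀ {X Y Z : C} (f : X ⟶ Y) (g : Y ⟶ Z), W f → W g → W (f ≫ g))
    (CF2 : ∀ {A B C' : C} (f : C' ⟶ B) (w : A ⟶ B), W w →
      ∃ (D : C) (f' : D ⟶ A) (w' : D ⟶ C'), W w' ∧ w' ≫ f = f' ≫ w)
    (CF3 : ∀ {A B C' : C} (f g : A ⟶ B) (w : B ⟶ C'), W w → f ≫ w = g ≫ w →
      ∃ (X : C) (w' : X ⟶ A), W w' ∧ w' ≫ f = w' ≫ g)
    -- two parallel arrows of C(W⁻¹): spans from A to B with left leg in W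
    {A B S₁ S₂ : C} (w₁ : S₁ ⟶ A) (f₁ : S₁ ⟶ B) (w₂ : S₂ ⟶ A) (f₂ : S₂ ⟶ B)
    (hw₁ : W w₁) (hw₂ : W w₂)
    -- two representatives of 2-cells between these arrows
    {T T' : C} (u₁ : T ⟶ S₁) (u₂ : T ⟶ S₂) (u₁' : T' ⟶ S₁) (u₂' : T' ⟶ S₂)
    (hTw : u₁ ≫ w₁ = u₂ ≫ w₂) (hTf : u₁ ≫ f₁ = u₂ ≫ f₂) (hTW : W (u₁ ≫ w₁))
    (hT'w : u₁' ≫ w₁ = u₂' ≫ w₂) (hT'f : u₁' ≫ f₁ = u₂' ≫ f₂) (hT'W : W (u₁' ≫ w₁)) :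
    -- the two representatives are equivalent, i.e. the two 2-cells coincide
    ∃ (T'' : C) (t : T'' ⟶ T) (t' : T'' ⟶ T'),
      t ≫ u₁ = t' ≫ u₁' ∧ t ≫ u₂ = t' ≫ u₂' ∧ W (t ≫ u₁ ≫ w₁) := by
  -- CF2: fill the square between u₁ ≫ w₁ and u₁' ≫ w₁
  obtain ⟨D, q, p, hp, hsq⟩ := CF2 (u₁ ≫ w₁) (u₁' ≫ w₁) hT'W
  -- CF3: equalize p ≫ u₁ and q ≫ u₁' using w₁
  obtain ⟨X, s, hs, hs1⟩ := CF3 (p ≫ u₁) (q ≫ u₁') w₁ hw₁ (by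
    simp only [Category.assoc]
    simpa only [Category.assoc] using hsq)
  -- CF3 again: equalize the second components using w₂
  obtain ⟨X', r, hr, hr2⟩ := CF3 (s ≫ p ≫ u₂) (s ≫ q ≫ u₂') w₂ hw₂ (by
    have h1 : s ≫ p ≫ u₂ ≫ w₂ = s ≫ p ≫ u₁ ≫ w₁ := by
      rw [← hTw]
    have h2 : s ≫ q ≫ u₂' ≫ w₂ = s ≫ q ≫ u₁' ≫ w₁ := by
      rw [← hT'w]
    have h3 : s ≫ p ≫ u₁ ≫ w₁ = s ≫ q ≫ u₁' ≫ w₁ := by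
      have := congrArg (· ≫ w₁) hs1
      simpa only [Category.assoc] using this
    simp only [Category.assoc] at h1 h2 h3 ⊢
    rw [h1, h3, h2])
  refine ⟨X', r ≫ s ≫ p, r ≫ s ≫ q, ?_, ?_, ?_⟩
  · have := congrArg (r ≫ ·) hs1
    simpa only [Category.assoc] using this
  · simpa only [Category.assoc] using hr2
  · have : W (p ≫ u₁ ≫ w₁) := CF1_comp p (u₁ ≫ w₁) hp hTW
    have : W (s ≫ p ≫ u₁ ≫ w₁) := CF1_comp s _ hs this
    simpa only [Category.assoc] using CF1_comp r _ hr this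
end

section
/- In a double category whose category of vertical arrows (objects and vertical morphisms) is a posetal groupoid, if a horizontal arrow f has a vertical companion v with binding cells ψ, χ, then the inverse vertical arrow v⁻¹ is a conjoint of f, with binding cells obtained as the vertical inverses of the binding cells for the companion pair. Hence in a weakly globular double category, a horizontal arrow has a vertical conjoint if and only if it has a vertical companion. -/
/-!
A (strict) double category, presented as: objects, vertical arrows,
horizontal arrows and double cells (indexed by their horizontal and vertical
boundaries), with vertical and horizontal identities and compositions of
cells satisfying the usual unit, associativity, interchange and
functoriality-of-identities laws (stated with `HEq` where boundary types only
agree propositionally).  This is equivalent to the definition of a double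
category as an internal category in `Cat`.
-/

universe u v

structure DoubleCat where
  Obj : Type u
  /-- vertical arrows -/
  V : Obj → Obj → Type v
  vid : ∀ A, V A A
  vcomp : ∀ {A B C}, V A B → V B C → V A C
  vid_comp : ∀ {A B} (u : V A B), vcomp (vid A) u = u
  vcomp_vid : ∀ {A B} (u : V A B), vcomp u (vid B) = u
  vassoc : ∀ {A B C D} (u : V A B) (w : V B C) (x : V C D),
    vcomp (vcomp u w) x = vcomp u (vcomp w x)
  /-- horizontal arrows -/
  H : Obj → Obj → Type v
  hid : ∀ A, H A A
  hcomp : ∀ {A B C}, H A B → H B C → H A C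
  hid_comp : ∀ {A B} (f : H A B), hcomp (hid A) f = f
  hcomp_hid : ∀ {A B} (f : H A B), hcomp f (hid B) = f
  hassoc : ∀ {A B C D} (f : H A B) (g : H B C) (h : H C D),
    hcomp (hcomp f g) h = hcomp f (hcomp g h)
  /-- double cells: `Cell f g u w` has horizontal source `f`, horizontal
  target `g`, left vertical boundary `u` and right vertical boundary `w` -/
  Cell : ∀ {A B A' B'}, H A B → H A' B' → V A A' → V B B' → Type v
  /-- vertical identity cell on a horizontal arrow -/
  cvid : ∀ {A B} (f : H A B), Cell f f (vid A) (vid B)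
  /-- vertical composition of cells -/
  cvcomp : ∀ {A₀ B₀ A₁ B₁ A₂ B₂} {f : H A₀ B₀} {g : H A₁ B₁} {h : H A₂ B₂}
    {u₀ : V A₀ A₁} {w₀ : V B₀ B₁} {u₁ : V A₁ A₂} {w₁ : V B₁ B₂},
    Cell f g u₀ w₀ → Cell g h u₁ w₁ → Cell f h (vcomp u₀ u₁) (vcomp w₀ w₁)
  /-- horizontal identity cell on a vertical arrow -/
  chid : ∀ {A A'} (u : V A A'), Cell (hid A) (hid A') u u
  /-- horizontal composition of cells -/
  chcomp : ∀ {A B C A' B' C'} {f : H A B} {f' : H B C} {g : H A' B'} {g' : H B' C'}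
    {u : V A A'} {w : V B B'} {x : V C C'},
    Cell f g u w → Cell f' g' w x → Cell (hcomp f f') (hcomp g g') u x
  cvid_cvcomp : ∀ {A₀ B₀ A₁ B₁} {f : H A₀ B₀} {g : H A₁ B₁}
    {u : V A₀ A₁} {w : V B₀ B₁} (α : Cell f g u w), HEq (cvcomp (cvid f) α) α
  cvcomp_cvid : ∀ {A₀ B₀ A₁ B₁} {f : H A₀ B₀} {g : H A₁ B₁}
    {u : V A₀ A₁} {w : V B₀ B₁} (α : Cell f g u w), HEq (cvcomp α (cvid g)) α
  cvassoc : ∀ {A₀ B₀ A₁ B₁ A₂ B₂ A₃ B₃}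
    {f₀ : H A₀ B₀} {f₁ : H A₁ B₁} {f₂ : H A₂ B₂} {f₃ : H A₃ B₃}
    {u₀ : V A₀ A₁} {w₀ : V B₀ B₁} {u₁ : V A₁ A₂} {w₁ : V B₁ B₂}
    {u₂ : V A₂ A₃} {w₂ : V B₂ B₃}
    (α : Cell f₀ f₁ u₀ w₀) (β : Cell f₁ f₂ u₁ w₁) (γ : Cell f₂ f₃ u₂ w₂),
    HEq (cvcomp (cvcomp α β) γ) (cvcomp α (cvcomp β γ))
  chid_chcomp : ∀ {A B A' B'} {f : H A B} {g : H A' B'}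
    {u : V A A'} {w : V B B'} (α : Cell f g u w), HEq (chcomp (chid u) α) α
  chcomp_chid : ∀ {A B A' B'} {f : H A B} {g : H A' B'}
    {u : V A A'} {w : V B B'} (α : Cell f g u w), HEq (chcomp α (chid w)) α
  chassoc : ∀ {A B C D A' B' C' D'}
    {f₀ : H A B} {f₁ : H B C} {f₂ : H C D}
    {g₀ : H A' B'} {g₁ : H B' C'} {g₂ : H C' D'}
    {u : V A A'} {w : V B B'} {x : V C C'} {y : V D D'}
    (α : Cell f₀ g₀ u w) (β : Cell f₁ g₁ w x) (γ : Cell f₂ g₂ x y),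
    HEq (chcomp (chcomp α β) γ) (chcomp α (chcomp β γ))
  interchange : ∀ {A B C A' B' C' A'' B'' C''}
    {f : H A B} {f' : H B C} {g : H A' B'} {g' : H B' C'}
    {h : H A'' B''} {h' : H B'' C''}
    {u : V A A'} {w : V B B'} {x : V C C'}
    {u' : V A' A''} {w' : V B' B''} {x' : V C' C''}
    (α : Cell f g u w) (β : Cell f' g' w x)
    (α' : Cell g h u' w') (β' : Cell g' h' w' x'),
    cvcomp (chcomp α β) (chcomp α' β') = chcomp (cvcomp α α') (cvcomp β β')
  chid_vcomp : ∀ {A A' A''} (u : V A A') (u' : V A' A''),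
    chid (vcomp u u') = cvcomp (chid u) (chid u')
  cvid_hcomp : ∀ {A B C} (f : H A B) (g : H B C),
    cvid (hcomp f g) = chcomp (cvid f) (cvid g)
  chid_vid : ∀ A, chid (vid A) = cvid (hid A)

namespace DoubleCat

variable (D : DoubleCat.{u, v})

/-- `(ψ, χ)` exhibit the vertical arrow `v` as a companion of the horizontal
arrow `f` (binding cells satisfying the two companion equations). -/
def IsCompanionPair {A B : D.Obj} (f : D.H A B) (v : D.V A B)
    (ψ : D.Cell (D.hid A) f (D.vid A) v) (χ : D.Cell f (D.hid B) v (D.vid B)) : Prop :=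
  HEq (D.chcomp ψ χ) (D.cvid f) ∧ HEq (D.cvcomp ψ χ) (D.chid v)

/-- `f` has a vertical companion. -/
def HasCompanion {A B : D.Obj} (f : D.H A B) : Prop :=
  ∃ v ψ χ, D.IsCompanionPair f v ψ χ

/-- a double cell is vertically invertible if it has a vertical inverse. -/
def VerticallyInvertible {A B A' B' : D.Obj} {f : D.H A B} {g : D.H A' B'}
    {u : D.V A A'} {w : D.V B B'} (α : D.Cell f g u w) : Prop :=
  ∃ (u' : D.V A' A) (w' : D.V B' B) (β : D.Cell g f u' w'),
    D.vcomp u u' = D.vid A ∧ D.vcomp w w' = D.vid B ∧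
    HEq (D.cvcomp α β) (D.cvid f) ∧ HEq (D.cvcomp β α) (D.cvid g)

/-- Weak globularity of a double category `D`:
* the vertical arrow category is a posetal groupoid (equivalently, it is
  equivalent to the discrete category on its set of connected components);
* the Segal map `η₂ : X₁ ×_{X₀} X₁ → X₁ ×_{X₀^d} X₁` is essentially
  surjective (with posetality this makes it an equivalence, which is the
  Segal condition in the definition of weak globularity): every pair of
  horizontal arrows which is composable up to a vertical arrow is vertically
  isomorphic to a strictly composable pair. -/
structure IsWeaklyGlobular : Prop where
  vhom_subsingleton : ∀ A B : D.Obj, Subsingleton (D.V A B)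
  vhom_inv : ∀ {A B : D.Obj} (u : D.V A B),
    ∃ u' : D.V B A, D.vcomp u u' = D.vid A ∧ D.vcomp u' u = D.vid B
  segal : ∀ {A B A' B' : D.Obj} (f : D.H A B) (g : D.H A' B') (_ : D.V B A'),
    ∃ (A'' B'' C'' : D.Obj) (f' : D.H A'' B'') (g' : D.H B'' C'')
      (y₁ : D.V A'' A) (y₂ : D.V B'' B) (y₂' : D.V B'' A') (y₃ : D.V C'' B')
      (α : D.Cell f' f y₁ y₂) (β : D.Cell g' g y₂' y₃),
      D.VerticallyInvertible α ∧ D.VerticallyInvertible β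

end DoubleCat

/-!
STATEMENT 10: In a double category whose category of vertical arrows is a
posetal groupoid (as in a weakly globular double category), if a horizontal
arrow `f` has a vertical companion `v` with binding cells `ψ, χ`, then the
inverse vertical arrow `w = v⁻¹` is a conjoint of `f`, with binding cells
obtained as the vertical inverses of `χ` and `ψ`.  Hence a horizontal arrow
has a vertical conjoint if and only if it has a vertical companion.
-/

section Auxiliary

/-- Congruence for vertical composition of cells, assuming vertical homs are
subsingletons. -/
theorem dc_cvcongr (D : DoubleCat) (hsub : ∀ X Y : D.Obj, Subsingleton (D.V X Y))
    {A₀ B₀ A₁ B₁ A₂ B₂ : D.Obj}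
    {f f' : D.H A₀ B₀} {g g' : D.H A₁ B₁} {h h' : D.H A₂ B₂}
    {u₀ u₀' : D.V A₀ A₁} {w₀ w₀' : D.V B₀ B₁} {u₁ u₁' : D.V A₁ A₂} {w₁ w₁' : D.V B₁ B₂}
    (hf : f = f') (hg : g = g') (hh : h = h')
    {a : D.Cell f g u₀ w₀} {a' : D.Cell f' g' u₀' w₀'}
    {b : D.Cell g h u₁ w₁} {b' : D.Cell g' h' u₁' w₁'}
    (ha : HEq a a') (hb : HEq b b') :
    HEq (D.cvcomp a b) (D.cvcomp a' b') := by
  subst hf; subst hg; subst hh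
  obtain rfl : u₀ = u₀' := @Subsingleton.elim _ (hsub _ _) _ _
  obtain rfl : w₀ = w₀' := @Subsingleton.elim _ (hsub _ _) _ _
  obtain rfl : u₁ = u₁' := @Subsingleton.elim _ (hsub _ _) _ _
  obtain rfl : w₁ = w₁' := @Subsingleton.elim _ (hsub _ _) _ _
  exact heq_of_eq (by rw [eq_of_heq ha, eq_of_heq hb])

/-- Congruence for horizontal composition of cells. -/
theorem dc_chcongr (D : DoubleCat) (hsub : ∀ X Y : D.Obj, Subsingleton (D.V X Y))
    {A B C A' B' C' : D.Obj}
    {f₁ f₁' : D.H A B} {f₂ f₂' : D.H B C} {g₁ g₁' : D.H A' B'} {g₂ g₂' : D.H B' C'}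
    {u u' : D.V A A'} {w w' : D.V B B'} {x x' : D.V C C'}
    (h1 : f₁ = f₁') (h2 : f₂ = f₂') (h3 : g₁ = g₁') (h4 : g₂ = g₂')
    {a : D.Cell f₁ g₁ u w} {a' : D.Cell f₁' g₁' u' w'}
    {b : D.Cell f₂ g₂ w x} {b' : D.Cell f₂' g₂' w' x'}
    (ha : HEq a a') (hb : HEq b b') :
    HEq (D.chcomp a b) (D.chcomp a' b') := by
  subst h1; subst h2; subst h3; subst h4
  obtain rfl : u = u' := @Subsingleton.elim _ (hsub _ _) _ _
  obtain rfl : w = w' := @Subsingleton.elim _ (hsub _ _) _ _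
  obtain rfl : x = x' := @Subsingleton.elim _ (hsub _ _) _ _
  exact heq_of_eq (by rw [eq_of_heq ha, eq_of_heq hb])

theorem dc_chidcongr (D : DoubleCat) {X Y : D.Obj} {u u' : D.V X Y} (h : u = u') :
    HEq (D.chid u) (D.chid u') := by subst h; exact HEq.rfl

theorem dc_cvidcongr (D : DoubleCat) {A B : D.Obj} {f g : D.H A B} (h : f = g) :
    HEq (D.cvid f) (D.cvid g) := by subst h; exact HEq.rfl

/-- Key lemma: a companion pair with a vertically posetal-groupoid base yields
a conjoint pair on the inverse vertical arrow, whose binding cells are the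
vertical inverses of the companion binding cells. -/
theorem dc_key (D : DoubleCat) (hsub : ∀ X Y : D.Obj, Subsingleton (D.V X Y))
    {A B : D.Obj} (f : D.H A B) (v : D.V A B) (w : D.V B A)
    (ψ : D.Cell (D.hid A) f (D.vid A) v) (χ : D.Cell f (D.hid B) v (D.vid B))
    (hH : HEq (D.chcomp ψ χ) (D.cvid f)) (hV : HEq (D.cvcomp ψ χ) (D.chid v)) :
    ∃ (α : D.Cell (D.hid B) f w (D.vid B)) (β : D.Cell f (D.hid A) (D.vid A) w),
      HEq (D.cvcomp χ α) (D.cvid f) ∧ HEq (D.cvcomp α χ) (D.cvid (D.hid B)) ∧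
      HEq (D.cvcomp ψ β) (D.cvid (D.hid A)) ∧ HEq (D.cvcomp β ψ) (D.cvid f) ∧
      HEq (D.chcomp β α) (D.cvid f) ∧ HEq (D.cvcomp α β) (D.chid w) := by
  have eV : ∀ {X Y : D.Obj} (a b : D.V X Y), a = b :=
    fun {X Y} a b => @Subsingleton.elim _ (hsub X Y) a b
  have Eα : D.Cell (D.hid B) f (D.vcomp w (D.vid A)) (D.vcomp w v)
      = D.Cell (D.hid B) f w (D.vid B) := by
    rw [eV (D.vcomp w (D.vid A)) w, eV (D.vcomp w v) (D.vid B)]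
  have Eβ : D.Cell f (D.hid A) (D.vcomp v w) (D.vcomp (D.vid B) w)
      = D.Cell f (D.hid A) (D.vid A) w := by
    rw [eV (D.vcomp v w) (D.vid A), eV (D.vcomp (D.vid B) w) w]
  obtain ⟨α, hα⟩ : ∃ α : D.Cell (D.hid B) f w (D.vid B),
      HEq α (D.cvcomp (D.chid w) ψ) := ⟨cast Eα _, cast_heq _ _⟩
  obtain ⟨β, hβ⟩ : ∃ β : D.Cell f (D.hid A) (D.vid A) w,
      HEq β (D.cvcomp χ (D.chid w)) := ⟨cast Eβ _, cast_heq _ _⟩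
  -- (G2):  α · χ  =  1_{1_B}
  have G2 : HEq (D.cvcomp α χ) (D.cvid (D.hid B)) := by
    have s1 : HEq (D.cvcomp α χ) (D.cvcomp (D.cvcomp (D.chid w) ψ) χ) :=
      dc_cvcongr D hsub rfl rfl rfl hα HEq.rfl
    have s2 := D.cvassoc (D.chid w) ψ χ
    have s3 : HEq (D.cvcomp (D.chid w) (D.cvcomp ψ χ)) (D.cvcomp (D.chid w) (D.chid v)) :=
      dc_cvcongr D hsub rfl rfl rfl HEq.rfl hV
    have s4 : D.cvcomp (D.chid w) (D.chid v) = D.chid (D.vcomp w v) :=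
      (D.chid_vcomp w v).symm
    have s5 : HEq (D.chid (D.vcomp w v)) (D.chid (D.vid B)) := by
      rw [eV (D.vcomp w v) (D.vid B)]
    exact s1.trans (s2.trans (s3.trans ((heq_of_eq s4).trans
      (s5.trans (heq_of_eq (D.chid_vid B))))))
  -- (G3):  ψ · β  =  1_{1_A}
  have G3 : HEq (D.cvcomp ψ β) (D.cvid (D.hid A)) := by
    have t1 : HEq (D.cvcomp ψ β) (D.cvcomp ψ (D.cvcomp χ (D.chid w))) :=
      dc_cvcongr D hsub rfl rfl rfl HEq.rfl hβ
    have t2 := (D.cvassoc ψ χ (D.chid w)).symm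
    have t3 : HEq (D.cvcomp (D.cvcomp ψ χ) (D.chid w)) (D.cvcomp (D.chid v) (D.chid w)) :=
      dc_cvcongr D hsub rfl rfl rfl hV HEq.rfl
    have t4 : D.cvcomp (D.chid v) (D.chid w) = D.chid (D.vcomp v w) :=
      (D.chid_vcomp v w).symm
    have t5 : HEq (D.chid (D.vcomp v w)) (D.chid (D.vid A)) := by
      rw [eV (D.vcomp v w) (D.vid A)]
    exact t1.trans (t2.trans (t3.trans ((heq_of_eq t4).trans
      (t5.trans (heq_of_eq (D.chid_vid A))))))
  -- (G6):  α · β  =  1_w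
  have G6 : HEq (D.cvcomp α β) (D.chid w) := by
    have u1 : HEq (D.cvcomp α β)
        (D.cvcomp (D.cvcomp (D.chid w) ψ) (D.cvcomp χ (D.chid w))) :=
      dc_cvcongr D hsub rfl rfl rfl hα hβ
    have u2 := D.cvassoc (D.chid w) ψ (D.cvcomp χ (D.chid w))
    have inner : HEq (D.cvcomp ψ (D.cvcomp χ (D.chid w))) (D.chid (D.vcomp v w)) :=
      (D.cvassoc ψ χ (D.chid w)).symm.trans
        ((dc_cvcongr D hsub rfl rfl rfl hV HEq.rfl).trans
          (heq_of_eq (D.chid_vcomp v w).symm))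
    have u3 : HEq (D.cvcomp (D.chid w) (D.cvcomp ψ (D.cvcomp χ (D.chid w))))
        (D.cvcomp (D.chid w) (D.chid (D.vcomp v w))) :=
      dc_cvcongr D hsub rfl rfl rfl HEq.rfl inner
    have u4 : D.cvcomp (D.chid w) (D.chid (D.vcomp v w))
        = D.chid (D.vcomp w (D.vcomp v w)) := (D.chid_vcomp _ _).symm
    have u5 : HEq (D.chid (D.vcomp w (D.vcomp v w))) (D.chid w) := by
      rw [eV (D.vcomp w (D.vcomp v w)) w]
    exact u1.trans (u2.trans (u3.trans ((heq_of_eq u4).trans u5)))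
  -- (S1):  χ · α  =  β · ψ
  have S1 : HEq (D.cvcomp χ α) (D.cvcomp β ψ) := by
    have v1 : HEq (D.cvcomp χ α) (D.cvcomp χ (D.cvcomp (D.chid w) ψ)) :=
      dc_cvcongr D hsub rfl rfl rfl HEq.rfl hα
    have v2 := (D.cvassoc χ (D.chid w) ψ).symm
    have v3 : HEq (D.cvcomp (D.cvcomp χ (D.chid w)) ψ) (D.cvcomp β ψ) :=
      dc_cvcongr D hsub rfl rfl rfl hβ.symm HEq.rfl
    exact v1.trans (v2.trans v3)
  -- (S2):  β | α  =  χ · α   (2x2 interchange)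
  have S2 : HEq (D.chcomp β α) (D.cvcomp χ α) := by
    have ich := D.interchange ψ χ β α
    have hPid : HEq (D.chcomp ψ χ) (D.cvid (D.hcomp f (D.hid B))) :=
      hH.trans (dc_cvidcongr D (D.hcomp_hid f).symm)
    have l1 : HEq (D.cvcomp (D.chcomp ψ χ) (D.chcomp β α))
        (D.cvcomp (D.cvid (D.hcomp f (D.hid B))) (D.chcomp β α)) :=
      dc_cvcongr D hsub (by rw [D.hid_comp, D.hcomp_hid]) rfl rfl hPid HEq.rfl
    have l2 := D.cvid_cvcomp (D.chcomp β α)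
    have hQ : HEq (D.cvcomp ψ β) (D.chid (D.vcomp v w)) :=
      G3.trans ((heq_of_eq (D.chid_vid A).symm).trans
        (dc_chidcongr D (eV (D.vid A) (D.vcomp v w))))
    have r1 : HEq (D.chcomp (D.cvcomp ψ β) (D.cvcomp χ α))
        (D.chcomp (D.chid (D.vcomp v w)) (D.cvcomp χ α)) :=
      dc_chcongr D hsub rfl rfl rfl rfl hQ HEq.rfl
    have r2 := D.chid_chcomp (D.cvcomp χ α)
    exact l2.symm.trans (l1.symm.trans ((heq_of_eq ich).trans (r1.trans r2)))
  -- (G5):  β | α  =  1_f   (3x2 interchange grid with rows ψχ, βα, ψχ)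
  have G5 : HEq (D.chcomp β α) (D.cvid f) := by
    have i1 := D.interchange β α ψ χ
    have i2 := D.interchange ψ χ (D.cvcomp β ψ) (D.cvcomp α χ)
    have E2 : HEq (D.cvcomp (D.chcomp ψ χ)
        (D.cvcomp (D.chcomp β α) (D.chcomp ψ χ))) (D.chcomp β α) := by
      have e1a : HEq (D.cvcomp (D.chcomp β α) (D.chcomp ψ χ))
          (D.cvcomp (D.chcomp β α) (D.cvid (D.hcomp (D.hid A) f))) :=
        dc_cvcongr D hsub rfl rfl (by rw [D.hcomp_hid, D.hid_comp]) HEq.rfl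
          (hH.trans (dc_cvidcongr D (D.hid_comp f).symm))
      have e1 : HEq (D.cvcomp (D.chcomp β α) (D.chcomp ψ χ)) (D.chcomp β α) :=
        e1a.trans (D.cvcomp_cvid (D.chcomp β α))
      have e2a : HEq (D.cvcomp (D.chcomp ψ χ)
          (D.cvcomp (D.chcomp β α) (D.chcomp ψ χ)))
          (D.cvcomp (D.cvid (D.hcomp f (D.hid B)))
          (D.cvcomp (D.chcomp β α) (D.chcomp ψ χ))) :=
        dc_cvcongr D hsub (by rw [D.hid_comp, D.hcomp_hid]) rfl rfl
          (hH.trans (dc_cvidcongr D (D.hcomp_hid f).symm)) HEq.rfl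
      exact e2a.trans ((D.cvid_cvcomp _).trans e1)
    have RHSeval : HEq (D.chcomp (D.cvcomp ψ (D.cvcomp β ψ))
        (D.cvcomp χ (D.cvcomp α χ))) (D.cvid f) := by
      have ra : HEq (D.cvcomp ψ (D.cvcomp β ψ)) ψ := by
        have ra1 := (D.cvassoc ψ β ψ).symm
        have ra2 : HEq (D.cvcomp (D.cvcomp ψ β) ψ)
            (D.cvcomp (D.cvid (D.hid A)) ψ) :=
          dc_cvcongr D hsub rfl rfl rfl G3 HEq.rfl
        exact ra1.trans (ra2.trans (D.cvid_cvcomp ψ))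
      have rb : HEq (D.cvcomp χ (D.cvcomp α χ)) χ := by
        have rb1 : HEq (D.cvcomp χ (D.cvcomp α χ))
            (D.cvcomp χ (D.cvid (D.hid B))) :=
          dc_cvcongr D hsub rfl rfl rfl HEq.rfl G2
        exact rb1.trans (D.cvcomp_cvid χ)
      exact (dc_chcongr D hsub rfl rfl rfl rfl ra rb).trans hH
    have step : D.cvcomp (D.chcomp ψ χ) (D.cvcomp (D.chcomp β α) (D.chcomp ψ χ))
        = D.chcomp (D.cvcomp ψ (D.cvcomp β ψ)) (D.cvcomp χ (D.cvcomp α χ)) := by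
      rw [i1]; exact i2
    exact E2.symm.trans ((heq_of_eq step).trans RHSeval)
  have G1 : HEq (D.cvcomp χ α) (D.cvid f) := S2.symm.trans G5
  have G4 : HEq (D.cvcomp β ψ) (D.cvid f) := S1.symm.trans G1
  exact ⟨α, β, G1, G2, G3, G4, G5, G6⟩

/-- The horizontally-opposite double category. -/
def dc_hop (D : DoubleCat.{u, v}) : DoubleCat.{u, v} where
  Obj := D.Obj
  V := D.V
  vid := D.vid
  vcomp := D.vcomp
  vid_comp := D.vid_comp
  vcomp_vid := D.vcomp_vid
  vassoc := D.vassoc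
  H A B := D.H B A
  hid := D.hid
  hcomp f g := D.hcomp g f
  hid_comp f := D.hcomp_hid f
  hcomp_hid f := D.hid_comp f
  hassoc f g h := (D.hassoc h g f).symm
  Cell f g u w := D.Cell f g w u
  cvid := D.cvid
  cvcomp a b := D.cvcomp a b
  chid := D.chid
  chcomp a b := D.chcomp b a
  cvid_cvcomp a := D.cvid_cvcomp a
  cvcomp_cvid a := D.cvcomp_cvid a
  cvassoc a b c := D.cvassoc a b c
  chid_chcomp a := D.chcomp_chid a
  chcomp_chid a := D.chid_chcomp a
  chassoc a b c := (D.chassoc c b a).symm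
  interchange a b a' b' := D.interchange b a b' a'
  chid_vcomp := D.chid_vcomp
  cvid_hcomp f g := D.cvid_hcomp g f
  chid_vid := D.chid_vid

end Auxiliary

theorem stmt10 (D : DoubleCat)
    -- the vertical arrow category is a posetal groupoid
    (hposetal : ∀ X Y : D.Obj, Subsingleton (D.V X Y))
    (hgrpd : ∀ {X Y : D.Obj} (u : D.V X Y),
      ∃ u' : D.V Y X, D.vcomp u u' = D.vid X ∧ D.vcomp u' u = D.vid Y)
    -- a companion pair (f, v) with binding cells ψ, χ, and the inverse w of v
    {A B : D.Obj} (f : D.H A B) (v : D.V A B) (w : D.V B A)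
    (hw₁ : D.vcomp v w = D.vid A) (hw₂ : D.vcomp w v = D.vid B)
    (ψ : D.Cell (D.hid A) f (D.vid A) v) (χ : D.Cell f (D.hid B) v (D.vid B))
    (h : D.IsCompanionPair f v ψ χ) :
    (∃ (α : D.Cell (D.hid B) f w (D.vid B)) (β : D.Cell f (D.hid A) (D.vid A) w),
      -- α is the vertical inverse of the binding cell χ
      HEq (D.cvcomp χ α) (D.cvid f) ∧ HEq (D.cvcomp α χ) (D.cvid (D.hid B)) ∧
      -- β is the vertical inverse of the binding cell ψ
      HEq (D.cvcomp ψ β) (D.cvid (D.hid A)) ∧ HEq (D.cvcomp β ψ) (D.cvid f) ∧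
      -- (α, β) exhibit w as a conjoint of f
      HEq (D.chcomp β α) (D.cvid f) ∧ HEq (D.cvcomp α β) (D.chid w)) ∧
    -- hence: a horizontal arrow has a companion iff it has a conjoint
    (∀ {A' B' : D.Obj} (f' : D.H A' B'),
      (∃ v'' ψ'' χ'', D.IsCompanionPair f' v'' ψ'' χ'') ↔
      (∃ (w'' : D.V B' A') (α'' : D.Cell (D.hid B') f' w'' (D.vid B'))
          (β'' : D.Cell f' (D.hid A') (D.vid A') w''),
        HEq (D.chcomp β'' α'') (D.cvid f') ∧ HEq (D.cvcomp α'' β'') (D.chid w''))) := by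
  obtain ⟨hH, hV⟩ := h
  refine ⟨?_, ?_⟩
  · exact dc_key D hposetal f v w ψ χ hH hV
  · intro A' B' f'
    constructor
    · rintro ⟨v'', ψ'', χ'', hH', hV'⟩
      obtain ⟨w'', -, -⟩ := hgrpd v''
      obtain ⟨α, β, -, -, -, -, G5, G6⟩ := dc_key D hposetal f' v'' w'' ψ'' χ'' hH' hV'
      exact ⟨w'', α, β, G5, G6⟩
    · rintro ⟨w'', α'', β'', h1, h2⟩
      obtain ⟨uu, -, -⟩ := hgrpd w''
      obtain ⟨a, b, -, -, -, -, G5, G6⟩ :=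
        dc_key (dc_hop D) (fun X Y => hposetal X Y) (A := B') (B := A') f' w'' uu α'' β'' h1 h2
      exact ⟨uu, a, b, G5, G6⟩
end

section
/- Let C be a category with W satisfying CF1, CF2, CF3. In the weakly globular double category of fractions C{W}, there exists a vertical arrow from the object (w : A → B) to the object (w' : A' → B') if and only if B = B'; moreover such a vertical arrow, when it exists, is unique. Consequently, the category of objects and vertical arrows of C{W} is a posetal groupoid whose set of connected components is in bijection with the objects of C. -/
/-!
STATEMENT 12: In the weakly globular double category of fractions `C{W}`
(objects: arrows of `W`; vertical arrows from `(w₁ : A₁ ⟶ B)` to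
`(w₂ : A₂ ⟶ B')`: equivalence classes of spans `u₁ : C₀ ⟶ A₁`, `u₂ : C₀ ⟶ A₂`
with `w₁ ∘ u₁ = w₂ ∘ u₂ ∈ W`):
* a vertical arrow from `(w₁)` to `(w₂)` exists if and only if `B' = B`;
* such a vertical arrow is unique, i.e. any two representing spans are
  equivalent.
Consequently the category of objects and vertical arrows of `C{W}` is a
posetal groupoid whose set of connected components is in bijection with the
objects of `C`.
-/

open CategoryTheory

universe v u

theorem stmt12 {C : Type u} [Category.{v} C] (W : MorphismProperty C)
    (CF1_iso : ∀ {X Y : C} (f : X ⟶ Y), IsIso f → W f)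
    (CF1_comp : ∀ {X Y Z : C} (f : X ⟶ Y) (g : Y ⟶ Z), W f → W g → W (f ≫ g))
    (CF2 : ∀ {A B C' : C} (f : C' ⟶ B) (w : A ⟶ B), W w →
      ∃ (D : C) (f' : D ⟶ A) (w' : D ⟶ C'), W w' ∧ w' ≫ f = f' ≫ w)
    (CF3 : ∀ {A B C' : C} (f g : A ⟶ B) (w : B ⟶ C'), W w → f ≫ w = g ≫ w →
      ∃ (X : C) (w' : X ⟶ A), W w' ∧ w' ≫ f = w' ≫ g)
    {A₁ A₂ B B' : C} (w₁ : A₁ ⟶ B) (w₂ : A₂ ⟶ B') (hw₁ : W w₁) (hw₂ : W w₂) :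
    -- existence: there is a vertical arrow `(w₁) •→ (w₂)` iff `B' = B`
    ((∃ (h : B' = B) (C₀ : C) (u₁ : C₀ ⟶ A₁) (u₂ : C₀ ⟶ A₂),
        u₁ ≫ w₁ = u₂ ≫ w₂ ≫ eqToHom h ∧ W (u₁ ≫ w₁)) ↔ B' = B) ∧
    -- uniqueness: any two representing spans are equivalent
    (∀ (h : B' = B) (C₀ D₀ : C) (u₁ : C₀ ⟶ A₁) (u₂ : C₀ ⟶ A₂)
        (v₁ : D₀ ⟶ A₁) (v₂ : D₀ ⟶ A₂),
        u₁ ≫ w₁ = u₂ ≫ w₂ ≫ eqToHom h → W (u₁ ≫ w₁) →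
        v₁ ≫ w₁ = v₂ ≫ w₂ ≫ eqToHom h → W (v₁ ≫ w₁) →
        ∃ (E : C) (r : E ⟶ C₀) (s : E ⟶ D₀),
          r ≫ u₁ = s ≫ v₁ ∧ r ≫ u₂ = s ≫ v₂ ∧ W (r ≫ u₁ ≫ w₁)) := by
  constructor
  · constructor
    · rintro ⟨h, _⟩; exact h
    · rintro h
      refine ⟨h, ?_⟩
      have hW2 : W (w₂ ≫ eqToHom h) :=
        CF1_comp _ _ hw₂ (CF1_iso _ (by infer_instance))
      obtain ⟨D, f', w', hw', hcomm⟩ := CF2 w₁ (w₂ ≫ eqToHom h) hW2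
      exact ⟨D, w', f', by simpa using hcomm, CF1_comp _ _ hw' hw₁⟩
  · intro h C₀ D₀ u₁ u₂ v₁ v₂ hu hWu hv hWv
    -- CF2: complete the square on u₁≫w₁ and v₁≫w₁
    obtain ⟨D, f', w', hw', hcomm⟩ := CF2 (u₁ ≫ w₁) (v₁ ≫ w₁) hWv
    -- hcomm : w' ≫ (u₁ ≫ w₁) = f' ≫ (v₁ ≫ w₁)
    obtain ⟨X, t, ht, ht'⟩ := CF3 (w' ≫ u₁) (f' ≫ v₁) w₁ hw₁
      (by simpa [Category.assoc] using hcomm)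
    -- ht' : t ≫ w' ≫ u₁ = t ≫ f' ≫ v₁
    have key : (t ≫ w') ≫ u₂ ≫ w₂ = (t ≫ f') ≫ v₂ ≫ w₂ := by
      have h1 : (t ≫ w') ≫ u₁ ≫ w₁ = (t ≫ f') ≫ v₁ ≫ w₁ := by
        simp only [Category.assoc] at ht' ⊢
        rw [reassoc_of% ht']
      rw [hu, hv] at h1
      have := h1
      simp only [← Category.assoc] at this
      exact (cancel_mono (eqToHom h)).mp (by simpa [Category.assoc] using this)
    obtain ⟨Y, t₂, ht₂, ht₂'⟩ := CF3 ((t ≫ w') ≫ u₂) ((t ≫ f') ≫ v₂) w₂ hw₂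
      (by simpa [Category.assoc] using key)
    refine ⟨Y, t₂ ≫ t ≫ w', t₂ ≫ t ≫ f', ?_, ?_, ?_⟩
    · simp only [Category.assoc]
      rw [ht']
    · simpa [Category.assoc] using ht₂'
    · have := CF1_comp _ _ ht₂ (CF1_comp _ _ ht (CF1_comp _ _ hw' hWu))
      simpa [Category.assoc] using this
end

section
/- Let C be a category with W satisfying CF1, CF2, CF3. In the double category C{W}, for any frame consisting of horizontal arrows f₁ : (w₁) → (w₁'), f₂ : (w₂) → (w₂') and vertical arrows [u₁,C,u₂] : (w₁) •→ (w₂), [v₁,D,v₂] : (w₁') •→ (w₂'), there is at most one double cell filling this frame. -/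
/-!
STATEMENT 13: In the double category `C{W}`, for any frame consisting of
horizontal arrows `f₁ : (w₁) → (w₁')`, `f₂ : (w₂) → (w₂')` and vertical
arrows `[u₁,C₀,u₂] : (w₁) •→ (w₂)`, `[v₁,D₀,v₂] : (w₁') •→ (w₂')`, there is at
most one double cell filling this frame: any two component families `(φ)` and
`(ψ)` filling the frame agree after precomposition with an arrow `r` with
`w₁ ∘ u₁ ∘ r ∈ W`, i.e. they represent the same double cell.
-/

open CategoryTheory

universe v u

theorem stmt13 {C : Type u} [Category.{v} C] (W : MorphismProperty C)
    (CF1_iso : ∀ {X Y : C} (f : X ⟶ Y), IsIso f → W f)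
    (CF1_comp : ∀ {X Y Z : C} (f : X ⟶ Y) (g : Y ⟶ Z), W f → W g → W (f ≫ g))
    (CF2 : ∀ {A B C' : C} (f : C' ⟶ B) (w : A ⟶ B), W w →
      ∃ (D : C) (f' : D ⟶ A) (w' : D ⟶ C'), W w' ∧ w' ≫ f = f' ≫ w)
    (CF3 : ∀ {A B C' : C} (f g : A ⟶ B) (w : B ⟶ C'), W w → f ≫ w = g ≫ w →
      ∃ (X : C) (w' : X ⟶ A), W w' ∧ w' ≫ f = w' ≫ g)
    -- the four objects of the frame
    {A₁ A₂ B A₁' A₂' B' : C}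
    (w₁ : A₁ ⟶ B) (w₂ : A₂ ⟶ B) (w₁' : A₁' ⟶ B') (w₂' : A₂' ⟶ B')
    (hw₁ : W w₁) (hw₂ : W w₂) (hw₁' : W w₁') (hw₂' : W w₂')
    -- the horizontal arrows of the frame
    (f₁ : A₁ ⟶ A₁') (f₂ : A₂ ⟶ A₂')
    -- representatives of the two vertical arrows of the frame
    {C₀ D₀ : C} (u₁ : C₀ ⟶ A₁) (u₂ : C₀ ⟶ A₂) (v₁ : D₀ ⟶ A₁') (v₂ : D₀ ⟶ A₂')
    (hu : u₁ ≫ w₁ = u₂ ≫ w₂) (huW : W (u₁ ≫ w₁))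
    (hv : v₁ ≫ w₁' = v₂ ≫ w₂') (hvW : W (v₁ ≫ w₁'))
    -- two component families filling the frame
    (φ ψ : C₀ ⟶ D₀)
    (hφ₁ : φ ≫ v₁ = u₁ ≫ f₁) (hφ₂ : φ ≫ v₂ = u₂ ≫ f₂)
    (hψ₁ : ψ ≫ v₁ = u₁ ≫ f₁) (hψ₂ : ψ ≫ v₂ = u₂ ≫ f₂) :
    -- the two families represent the same double cell
    ∃ (E : C) (r : E ⟶ C₀), W (r ≫ u₁ ≫ w₁) ∧ r ≫ φ = r ≫ ψ := by
  obtain ⟨E, r, hrW, hr⟩ := CF3 φ ψ (v₁ ≫ w₁') hvW (by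
    rw [← Category.assoc, ← Category.assoc, hφ₁, hψ₁])
  exact ⟨E, r, CF1_comp r (u₁ ≫ w₁) hrW huW, hr⟩
end

section
/- Let C be a category with W satisfying CF1, CF2, CF3. In C{W}, for every pair consisting of a horizontal arrow g : (w₂) → (w₂') and a vertical arrow [v₁,D,v₂] : (w₁') •→ (w₂'), there exists a horizontal arrow f : (w₁) → (w₁') and a vertical arrow [u₁,C,u₂] : (w₁) •→ (w₂) together with a double cell filling the resulting square; i.e., the horizontal-codomain functor d₁ : (C{W})₁ → (C{W})₀ is an isofibration. -/
/-!
STATEMENT 14: In `C{W}`, for every pair consisting of a horizontal arrow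
`g : (w₂) → (w₂')` and a vertical arrow `[v₁,D₀,v₂] : (w₁') •→ (w₂')`, there
exist an object `(w₁)`, a horizontal arrow `f : (w₁) → (w₁')`, a vertical
arrow `[u₁,E,u₂] : (w₁) •→ (w₂)` and a double cell (with component `φ`)
filling the resulting square; i.e. the horizontal-codomain functor
`d₁ : (C{W})₁ → (C{W})₀` is an isofibration.
-/

open CategoryTheory

universe v u

theorem stmt14 {C : Type u} [Category.{v} C] (W : MorphismProperty C)
    (CF1_iso : ∀ {X Y : C} (f : X ⟶ Y), IsIso f → W f)
    (CF1_comp : ∀ {X Y Z : C} (f : X ⟶ Y) (g : Y ⟶ Z), W f → W g → W (f ≫ g))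
    (CF2 : ∀ {A B C' : C} (f : C' ⟶ B) (w : A ⟶ B), W w →
      ∃ (D : C) (f' : D ⟶ A) (w' : D ⟶ C'), W w' ∧ w' ≫ f = f' ≫ w)
    (CF3 : ∀ {A B C' : C} (f g : A ⟶ B) (w : B ⟶ C'), W w → f ≫ w = g ≫ w →
      ∃ (X : C) (w' : X ⟶ A), W w' ∧ w' ≫ f = w' ≫ g)
    -- a horizontal arrow g : (w₂) → (w₂')
    {A₂ B A₁' A₂' B' : C}
    (w₂ : A₂ ⟶ B) (w₁' : A₁' ⟶ B') (w₂' : A₂' ⟶ B')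
    (hw₂ : W w₂) (hw₁' : W w₁') (hw₂' : W w₂')
    (g : A₂ ⟶ A₂')
    -- a vertical arrow [v₁, D₀, v₂] : (w₁') •→ (w₂')
    {D₀ : C} (v₁ : D₀ ⟶ A₁') (v₂ : D₀ ⟶ A₂')
    (hv : v₁ ≫ w₁' = v₂ ≫ w₂') (hvW : W (v₁ ≫ w₁')) :
    -- completion to a double cell
    ∃ (A₁ : C) (w₁ : A₁ ⟶ B), W w₁ ∧
      ∃ (f : A₁ ⟶ A₁') (E : C) (u₁ : E ⟶ A₁) (u₂ : E ⟶ A₂),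
        u₁ ≫ w₁ = u₂ ≫ w₂ ∧ W (u₁ ≫ w₁) ∧
        ∃ (φ : E ⟶ D₀), φ ≫ v₁ = u₁ ≫ f ∧ φ ≫ v₂ = u₂ ≫ g := by
  -- Use CF2 on cospan g ≫ w₂' and v₂ ≫ w₂' (the latter in W by hv ▸ hvW)
  obtain ⟨E₀, u₂₀, φ₀, hφ₀W, hsq⟩ := CF2 (g ≫ w₂') (v₂ ≫ w₂') (hv ▸ hvW)
  -- hsq : φ₀ ≫ (g ≫ w₂') = u₂₀ ≫ (v₂ ≫ w₂')
  obtain ⟨X, t, htW, ht⟩ := CF3 (φ₀ ≫ g) (u₂₀ ≫ v₂) w₂' hw₂'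
    (by simpa [Category.assoc] using hsq)
  refine ⟨X, (t ≫ φ₀) ≫ w₂, CF1_comp _ _ (CF1_comp _ _ htW hφ₀W) hw₂,
    (t ≫ u₂₀) ≫ v₁, X, 𝟙 X, t ≫ φ₀, by simp, ?_, t ≫ u₂₀, by simp, ?_⟩
  · simpa using CF1_comp _ _ (CF1_comp _ _ htW hφ₀W) hw₂
  · simpa [Category.assoc] using ht.symm
end

section
/- Let X be a weakly globular double category. A horizontal arrow w : A → B of X becomes a quasi unit in the fundamental bicategory Bic(X) if and only if w has a vertical companion in X. Concretely: if there exists a vertically invertible double cell ζ from w to Id_{θ(Ā)} (exhibiting w ≅ 1_{Ā} in Bic(X)), then the vertical arrow obtained by composing the boundary vertical isomorphisms of ζ is a companion of w, and conversely one binding cell of a companion pair provides the invertible 2-cell w ≅ 1_{Ā}. -/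
/-!
A (strict) double category, presented as: objects, vertical arrows,
horizontal arrows and double cells (indexed by their horizontal and vertical
boundaries), with vertical and horizontal identities and compositions of
cells satisfying the usual unit, associativity, interchange and
functoriality-of-identities laws (stated with `HEq` where boundary types only
agree propositionally).  This is equivalent to the definition of a double
category as an internal category in `Cat`.
-/

universe u v

/-!
STATEMENT 17: Let `X` be a weakly globular double category.  A horizontal
arrow `w : A → B` of `X` becomes a quasi unit in the fundamental bicategory
`Bic(X)` — i.e. there is a vertically invertible double cell from `w` to a
horizontal identity arrow `Id_{A₀}` for some object `A₀` (necessarily in the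
same connected component, an invertible 2-cell `w ≅ 1` in `Bic(X)`) — if and
only if `w` has a vertical companion in `X`.
-/

/-- Congruence for vertical composition of cells, where the horizontal and
vertical boundaries only agree propositionally. -/
theorem DoubleCat.cvcomp_congr (D : DoubleCat) {A₀ B₀ A₁ B₁ A₂ B₂ : D.Obj}
    {f f' : D.H A₀ B₀} {g g' : D.H A₁ B₁} {h h' : D.H A₂ B₂}
    {u₀ u₀' : D.V A₀ A₁} {w₀ w₀' : D.V B₀ B₁} {u₁ u₁' : D.V A₁ A₂} {w₁ w₁' : D.V B₁ B₂}
    {α : D.Cell f g u₀ w₀} {α' : D.Cell f' g' u₀' w₀'}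
    {β : D.Cell g h u₁ w₁} {β' : D.Cell g' h' u₁' w₁'}
    (hf : f = f') (hg : g = g') (hh : h = h')
    (hu₀ : u₀ = u₀') (hw₀ : w₀ = w₀') (hu₁ : u₁ = u₁') (hw₁ : w₁ = w₁')
    (hα : HEq α α') (hβ : HEq β β') :
    HEq (D.cvcomp α β) (D.cvcomp α' β') := by
  subst hf hg hh hu₀ hw₀ hu₁ hw₁
  rw [eq_of_heq hα, eq_of_heq hβ]

/-- Congruence for horizontal composition of cells, where the horizontal and
vertical boundaries only agree propositionally. -/
theorem DoubleCat.chcomp_congr (D : DoubleCat) {A B C A' B' C' : D.Obj}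
    {f f₂ : D.H A B} {f' f₂' : D.H B C} {g g₂ : D.H A' B'} {g' g₂' : D.H B' C'}
    {u u₂ : D.V A A'} {w w₂ : D.V B B'} {x x₂ : D.V C C'}
    {α : D.Cell f g u w} {β : D.Cell f' g' w x}
    {α₂ : D.Cell f₂ g₂ u₂ w₂} {β₂ : D.Cell f₂' g₂' w₂ x₂}
    (hf : f = f₂) (hf' : f' = f₂') (hg : g = g₂) (hg' : g' = g₂')
    (hu : u = u₂) (hw : w = w₂) (hx : x = x₂)
    (hα : HEq α α₂) (hβ : HEq β β₂) :
    HEq (D.chcomp α β) (D.chcomp α₂ β₂) := by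
  subst hf hf' hg hg' hu hw hx
  rw [eq_of_heq hα, eq_of_heq hβ]

theorem stmt17 (D : DoubleCat) (hWG : D.IsWeaklyGlobular)
    {A B : D.Obj} (w : D.H A B) :
    (∃ (A₀ : D.Obj) (u : D.V A A₀) (u' : D.V B A₀)
        (ζ : D.Cell w (D.hid A₀) u u'), D.VerticallyInvertible ζ) ↔
    D.HasCompanion w := by
  have vext : ∀ {P Q : D.Obj} (x y : D.V P Q), x = y := fun x y =>
    (hWG.vhom_subsingleton _ _).allEq x y
  constructor
  · -- quasi unit ⇒ companion
    rintro ⟨A₀, u, u', ζ, p, q, β, hp, hq, hζβ, hβζ⟩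
    set ψ₀ : D.Cell (D.hid A) w (D.vcomp u p) (D.vcomp u q) :=
      D.cvcomp (D.chid u) β with hψ₀
    set χ₀ : D.Cell w (D.hid B) (D.vcomp u q) (D.vcomp u' q) :=
      D.cvcomp ζ (D.chid q) with hχ₀
    have hTψ : D.Cell (D.hid A) w (D.vcomp u p) (D.vcomp u q)
        = D.Cell (D.hid A) w (D.vid A) (D.vcomp u q) := by rw [hp]
    have hTχ : D.Cell w (D.hid B) (D.vcomp u q) (D.vcomp u' q)
        = D.Cell w (D.hid B) (D.vcomp u q) (D.vid B) := by rw [hq]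
    refine ⟨D.vcomp u q, cast hTψ ψ₀, cast hTχ χ₀, ?_, ?_⟩
    · -- horizontal binding equation
      have e1 : HEq (D.chcomp (cast hTψ ψ₀) (cast hTχ χ₀)) (D.chcomp ψ₀ χ₀) :=
        D.chcomp_congr rfl rfl rfl rfl hp.symm rfl hq.symm
          (cast_heq _ _) (cast_heq _ _)
      have e2 : D.chcomp ψ₀ χ₀
          = D.cvcomp (D.chcomp (D.chid u) ζ) (D.chcomp β (D.chid q)) :=
        (D.interchange (D.chid u) ζ β (D.chid q)).symm
      have e3 : HEq (D.cvcomp (D.chcomp (D.chid u) ζ) (D.chcomp β (D.chid q)))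
          (D.cvcomp ζ β) :=
        D.cvcomp_congr (D.hid_comp w) (D.hcomp_hid (D.hid A₀)) (D.hcomp_hid w)
          rfl rfl rfl rfl (D.chid_chcomp ζ) (D.chcomp_chid β)
      exact ((e1.trans (heq_of_eq e2)).trans e3).trans hζβ
    · -- vertical binding equation
      have e1 : HEq (D.cvcomp (cast hTψ ψ₀) (cast hTχ χ₀)) (D.cvcomp ψ₀ χ₀) :=
        D.cvcomp_congr rfl rfl rfl hp.symm rfl rfl hq.symm
          (cast_heq _ _) (cast_heq _ _)
      have e2 : HEq (D.cvcomp ψ₀ χ₀) (D.cvcomp (D.chid u) (D.cvcomp β χ₀)) :=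
        D.cvassoc (D.chid u) β χ₀
      have e3 : HEq (D.cvcomp β χ₀) (D.cvcomp (D.cvcomp β ζ) (D.chid q)) :=
        (D.cvassoc β ζ (D.chid q)).symm
      have e4 : HEq (D.cvcomp (D.cvcomp β ζ) (D.chid q))
          (D.cvcomp (D.cvid (D.hid A₀)) (D.chid q)) :=
        D.cvcomp_congr rfl rfl rfl (vext _ _) (vext _ _) rfl rfl hβζ HEq.rfl
      have e5 : HEq (D.cvcomp (D.cvid (D.hid A₀)) (D.chid q)) (D.chid q) :=
        D.cvid_cvcomp (D.chid q)
      have e6 : HEq (D.cvcomp β χ₀) (D.chid q) := (e3.trans e4).trans e5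
      have e7 : HEq (D.cvcomp (D.chid u) (D.cvcomp β χ₀))
          (D.cvcomp (D.chid u) (D.chid q)) :=
        D.cvcomp_congr rfl rfl rfl rfl rfl (vext _ _) (vext _ _) HEq.rfl e6
      have e8 : D.cvcomp (D.chid u) (D.chid q) = D.chid (D.vcomp u q) :=
        (D.chid_vcomp u q).symm
      exact ((e1.trans e2).trans e7).trans (heq_of_eq e8)
  · -- companion ⇒ quasi unit
    rintro ⟨v, ψ, χ, h1, h2⟩
    obtain ⟨t, htv, hvt⟩ := hWG.vhom_inv v
    -- the candidate vertical inverse of χ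
    set β : D.Cell (D.hid B) w (D.vcomp t (D.vid A)) (D.vcomp t v) :=
      D.cvcomp (D.chid t) ψ with hβ
    -- second inverse law (also used below)
    have hd : HEq (D.cvcomp β χ) (D.cvid (D.hid B)) := by
      have e1 : HEq (D.cvcomp β χ) (D.cvcomp (D.chid t) (D.cvcomp ψ χ)) :=
        D.cvassoc (D.chid t) ψ χ
      have e2 : HEq (D.cvcomp (D.chid t) (D.cvcomp ψ χ))
          (D.cvcomp (D.chid t) (D.chid v)) :=
        D.cvcomp_congr rfl rfl rfl rfl rfl (vext _ _) (vext _ _) HEq.rfl h2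
      have e3 : HEq (D.cvcomp (D.chid t) (D.chid v)) (D.cvid (D.hid B)) := by
        rw [← D.chid_vcomp, hvt]; exact heq_of_eq (D.chid_vid B)
      exact (e1.trans e2).trans e3
    refine ⟨B, v, D.vid B, χ, D.vcomp t (D.vid A), D.vcomp t v, β,
      vext _ _, vext _ _, ?_, hd⟩
    -- first inverse law: χ ∘ᵥ β ≅ id
    have E : D.cvcomp
        (D.chcomp (D.chid (D.vcomp v (D.vcomp t (D.vid A)))) (D.cvcomp χ β))
        (D.chcomp ψ χ)
        = D.chcomp (D.cvcomp (D.chid (D.vcomp v (D.vcomp t (D.vid A)))) ψ)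
          (D.cvcomp (D.cvcomp χ β) χ) :=
      D.interchange (D.chid (D.vcomp v (D.vcomp t (D.vid A)))) (D.cvcomp χ β) ψ χ
    -- left side is χ ∘ᵥ β
    have hL : HEq (D.cvcomp
        (D.chcomp (D.chid (D.vcomp v (D.vcomp t (D.vid A)))) (D.cvcomp χ β))
        (D.chcomp ψ χ))
        (D.cvcomp (D.cvcomp χ β) (D.cvid w)) :=
      D.cvcomp_congr (D.hid_comp w) (D.hid_comp w) (D.hcomp_hid w)
        rfl rfl rfl rfl (D.chid_chcomp (D.cvcomp χ β)) h1
    have hLγ : HEq (D.cvcomp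
        (D.chcomp (D.chid (D.vcomp v (D.vcomp t (D.vid A)))) (D.cvcomp χ β))
        (D.chcomp ψ χ)) (D.cvcomp χ β) :=
      hL.trans (D.cvcomp_cvid (D.cvcomp χ β))
    -- right side is the identity cell on w
    have hP : HEq (D.cvcomp (D.chid (D.vcomp v (D.vcomp t (D.vid A)))) ψ) ψ := by
      have hc : HEq (D.chid (D.vcomp v (D.vcomp t (D.vid A))))
          (D.cvid (D.hid A)) := by
        rw [show D.vcomp v (D.vcomp t (D.vid A)) = D.vid A from vext _ _]
        exact heq_of_eq (D.chid_vid A)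
      have e1 : HEq (D.cvcomp (D.chid (D.vcomp v (D.vcomp t (D.vid A)))) ψ)
          (D.cvcomp (D.cvid (D.hid A)) ψ) :=
        D.cvcomp_congr rfl rfl rfl (vext _ _) (vext _ _) rfl rfl hc HEq.rfl
      exact e1.trans (D.cvid_cvcomp ψ)
    have hQ : HEq (D.cvcomp (D.cvcomp χ β) χ) χ := by
      have e1 : HEq (D.cvcomp (D.cvcomp χ β) χ) (D.cvcomp χ (D.cvcomp β χ)) :=
        D.cvassoc χ β χ
      have e2 : HEq (D.cvcomp χ (D.cvcomp β χ)) (D.cvcomp χ (D.cvid (D.hid B))) :=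
        D.cvcomp_congr rfl rfl rfl rfl rfl (vext _ _) (vext _ _) HEq.rfl hd
      exact (e1.trans e2).trans (D.cvcomp_cvid χ)
    have hR : HEq (D.chcomp (D.cvcomp (D.chid (D.vcomp v (D.vcomp t (D.vid A)))) ψ)
        (D.cvcomp (D.cvcomp χ β) χ)) (D.chcomp ψ χ) :=
      D.chcomp_congr rfl rfl rfl rfl (vext _ _) (vext _ _) (vext _ _) hP hQ
    exact (hLγ.symm.trans (heq_of_eq E)).trans (hR.trans h1)
end
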